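/- For every positive integer k there exists a k-connected X-convex bipartite graph G with pe(G) = 2. Specifically, let ℓ = k(k+2), take the complete bipartite graph K_{k,ℓ} with parts Y (|Y| = k) and X = {x_1, ..., x_ℓ}, and add vertices z_1, ..., z_{k+2} where z_i is adjacent to x_j for (i-1)k + 1 ≤ j ≤ ik; then G is k-connected, X-convex, and pe(G) = 2. -/

import Mathlib

open SimpleGraph

variable {V : Type*} [Fintype V] [DecidableEq V]

/-- Distance from a vertex `u` to the vertex set of a walk `P`. -/
noncomputable def walkDist (G : SimpleGraph V) {a b : V} (P : G.Walk a b) (u : V) : ℕ :=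
  P.support.toFinset.inf' ⟨a, List.mem_toFinset.mpr P.start_mem_support⟩ (fun x => G.dist u x)

/-- Eccentricity of a walk: max distance from any vertex of `G` to the walk. -/
noncomputable def eccW (G : SimpleGraph V) {a b : V} (P : G.Walk a b) : ℕ :=
  Finset.univ.sup (walkDist G P)

/-- Path eccentricity of a graph. -/
noncomputable def pe (G : SimpleGraph V) : ℕ :=
  sInf {m | ∃ (a b : V) (P : G.Walk a b), P.IsPath ∧ eccW G P = m}

/-- `P` is a longest path in `G`. -/
def IsLongestPath (G : SimpleGraph V) {a b : V} (P : G.Walk a b) : Prop :=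
  P.IsPath ∧ ∀ (c d : V) (Q : G.Walk c d), Q.IsPath → Q.length ≤ P.length

/-- `G` is `k`-connected. -/
def KConnected (k : ℕ) (G : SimpleGraph V) : Prop :=
  k + 1 ≤ Fintype.card V ∧
    ∀ S : Finset V, S.card < k → (G.induce ((↑S : Set V)ᶜ)).Connected

/-- Adjacency relation of the graph `G` from the paper: `K_{k,ℓ}` with parts
`Y = Fin k` and `X = Fin ℓ` where `ℓ = k(k+2)`, plus vertices `z₁, …, z_{k+2}`
(`Fin (k+2)`) where `z_i` is adjacent to `x_j` for `(i-1)k + 1 ≤ j ≤ ik`. -/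
def convexTightRel (k : ℕ) :
    (Fin k ⊕ Fin (k + 2)) ⊕ Fin (k * (k + 2)) →
    (Fin k ⊕ Fin (k + 2)) ⊕ Fin (k * (k + 2)) → Prop
  | Sum.inl (Sum.inl _), Sum.inr _ => True
  | Sum.inl (Sum.inr z), Sum.inr x => z.val * k ≤ x.val ∧ x.val < z.val * k + k
  | _, _ => False

/-!
Every vertex is within distance two of each `y ∈ Y` (through a common neighbour in `X`), so the
one-vertex path at `y` has eccentricity two. Conversely, deleting `Y` splits the graph into the
`k + 2` stars `{z_i} ∪ X_i`, where `X_i` is the `i`-th block of `k` consecutive vertices of `X`,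
and the closed neighbourhood of `z_i` lies in its star. A path of eccentricity one would have to
meet all `k + 2` stars, but it can only pass from one star to another through `Y`, which it visits
at most `k` times, so it meets at most `k + 1` of them.

For `k`-connectivity: fewer than `k` deleted vertices spare some `y ∈ Y` and, for every vertex
`w ∈ Y ∪ Z`, one of the `k` neighbours of `w` in `X`; all of `X` is adjacent to `y`.
-/

open Finset

lemma Finset.exists_apply_notMem_of_card_lt {α β : Type*} [Fintype α] {f : α → β}
    (hf : Function.Injective f) {s : Finset β} (hs : #s < Fintype.card α) : ∃ a, f a ∉ s := by
  by_contra! h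
  exact hs.not_ge (card_le_card_of_injOn f (fun a _ => h a) hf.injOn)

lemma List.Nodup.countP_le_card {α : Type*} [Fintype α] {l : List α} (hl : l.Nodup)
    (p : α → Bool) : l.countP p ≤ #{a | p a} := by
  classical
  rw [List.countP_eq_length_filter, ← List.toFinset_card_of_nodup (hl.filter p)]
  exact card_le_card fun a ha => by simp_all

namespace SimpleGraph

variable {α : Type*} {G : SimpleGraph α} {u v : α}

lemma Reachable.eq_or_adj_of_dist_le_one (h : G.Reachable u v) (hd : G.dist u v ≤ 1) :
    u = v ∨ G.Adj u v := by
  have : G.edist u v ≤ 1 := by rw [← h.coe_dist_eq_edist]; exact_mod_cast hd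
  exact (edist_le_one_iff_adj_or_eq.mp this).symm

lemma Walk.card_toFinset_filterMap_support_le {ι : Type*} [DecidableEq ι] (f : α → Option ι)
    (hf : ∀ ⦃u v⦄, G.Adj u v → f u = none ∨ f v = none ∨ f u = f v) {a b : α}
    (p : G.Walk a b) :
    #(p.support.filterMap f).toFinset ≤ p.support.tail.countP (fun v => (f v).isNone) + 1 := by
  induction p with
  | @nil u => cases h : f u <;> simp [h]
  | @cons a c b hadj p ih =>
    have hcount := p.support.tail_sublist.countP_le (p := fun v => (f v).isNone)
    rw [support_cons, List.tail_cons]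
    cases ha : f a with
    | none => rw [List.filterMap_cons_none ha]; omega
    | some r =>
      rw [List.filterMap_cons_some ha, List.toFinset_cons]
      rcases hf hadj with hna | hnc | hac
      · simp [ha] at hna
      · have hcount' : p.support.countP (fun v => (f v).isNone) =
            p.support.tail.countP (fun v => (f v).isNone) + 1 := by
          rw [← p.cons_tail_support, List.countP_cons_of_pos (by simpa using hnc), List.tail_cons]
        have := card_insert_le r (p.support.filterMap f).toFinset
        omega
      · have hr : r ∈ (p.support.filterMap f).toFinset :=
          List.mem_toFinset.mpr (List.mem_filterMap.mpr ⟨c, p.start_mem_support, hac ▸ ha⟩)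
        rw [insert_eq_of_mem hr]
        omega

end SimpleGraph

lemma eccW_le_iff {G : SimpleGraph V} {a b : V} (P : G.Walk a b) {m : ℕ} :
    eccW G P ≤ m ↔ ∀ u, ∃ v ∈ P.support, G.dist u v ≤ m := by
  simp only [eccW, walkDist, Finset.sup_le_iff, Finset.mem_univ, true_imp_iff]
  exact forall_congr' fun u => (Finset.inf'_le_iff _).trans (by simp)

lemma pe_eq_of_forall_le {G : SimpleGraph V} {m : ℕ} {a b : V} (P : G.Walk a b)
    (hP : P.IsPath) (hPm : eccW G P ≤ m)
    (hm : ∀ (c d : V) (Q : G.Walk c d), Q.IsPath → m ≤ eccW G Q) : pe G = m := by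
  have hP' : eccW G P ∈ {m | ∃ (a b : V) (P : G.Walk a b), P.IsPath ∧ eccW G P = m} :=
    ⟨a, b, P, hP, rfl⟩
  exact le_antisymm ((Nat.sInf_le hP').trans hPm)
    (le_csInf ⟨_, hP'⟩ (by rintro _ ⟨c, d, Q, hQ, rfl⟩; exact hm c d Q hQ))

namespace ConvexTight

variable {k : ℕ}

abbrev Vertex (k : ℕ) := (Fin k ⊕ Fin (k + 2)) ⊕ Fin (k * (k + 2))

abbrev graph (k : ℕ) : SimpleGraph (Vertex k) := SimpleGraph.fromRel (convexTightRel k)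

lemma card_vertex : Fintype.card (Vertex k) = k + (k + 2) + k * (k + 2) := by
  simp

lemma adj_inl_inl_inr (i : Fin k) (j : Fin (k * (k + 2))) :
    (graph k).Adj (.inl (.inl i)) (.inr j) := by
  simp [convexTightRel]

lemma adj_inl_inr_inr_iff {i : Fin (k + 2)} {j : Fin (k * (k + 2))} :
    (graph k).Adj (.inl (.inr i)) (.inr j) ↔ i.val * k ≤ j.val ∧ j.val < i.val * k + k := by
  simp [convexTightRel]

def blockVertex (i : Fin (k + 2)) (t : Fin k) : Fin (k * (k + 2)) :=
  ⟨i.val * k + t.val, by nlinarith [i.isLt, t.isLt]⟩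

lemma blockVertex_injective (i : Fin (k + 2)) : Function.Injective (blockVertex i) :=
  fun t t' h => Fin.ext (by simpa [blockVertex] using congrArg Fin.val h)

lemma adj_blockVertex (i : Fin (k + 2)) (t : Fin k) :
    (graph k).Adj (.inl (.inr i)) (.inr (blockVertex i t)) :=
  adj_inl_inr_inr_iff.mpr ⟨by simp [blockVertex], by simp [blockVertex, t.isLt]⟩

lemma adj_inr_of_le_of_le (w : Fin k ⊕ Fin (k + 2)) {j₁ j₂ j₃ : Fin (k * (k + 2))}
    (h₁ : (graph k).Adj (.inl w) (.inr j₁)) (h₃ : (graph k).Adj (.inl w) (.inr j₃))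
    (h₁₂ : j₁ ≤ j₂) (h₂₃ : j₂ ≤ j₃) : (graph k).Adj (.inl w) (.inr j₂) := by
  rcases w with i | i
  · exact adj_inl_inl_inr i j₂
  · rw [adj_inl_inr_inr_iff] at *
    rw [Fin.le_def] at h₁₂ h₂₃
    omega

/-- The star `{z_i} ∪ X_i` containing a vertex outside `Y`. -/
def region : Vertex k → Option (Fin (k + 2))
  | .inl (.inl _) => none
  | .inl (.inr i) => some i
  | .inr j => some ⟨j.val / k, Nat.div_lt_of_lt_mul j.isLt⟩

lemma card_filter_region_isNone : #{v : Vertex k | (region v).isNone} = k := by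
  have : ({v | (region v).isNone} : Finset (Vertex k)) =
      univ.map (Function.Embedding.inl.trans Function.Embedding.inl) := by
    ext ((i | i) | j) <;> simp [region]
  rw [this]
  simp

lemma region_eq_of_adj_inl_inr {i : Fin (k + 2)} {v : Vertex k}
    (h : (graph k).Adj (.inl (.inr i)) v) : region v = some i := by
  rcases v with (_ | _) | j
  · simp [convexTightRel] at h
  · simp [convexTightRel] at h
  · obtain ⟨hlo, hhi⟩ := adj_inl_inr_inr_iff.mp h
    exact congrArg some (Fin.ext (Nat.div_eq_of_lt_le hlo (by rw [Nat.succ_mul]; exact hhi)))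

lemma region_eq_none_or_eq_of_adj {u v : Vertex k} (h : (graph k).Adj u v) :
    region u = none ∨ region v = none ∨ region u = region v := by
  rcases u with (_ | i) | j
  · exact .inl rfl
  · exact .inr (.inr (region_eq_of_adj_inl_inr h).symm)
  · rcases v with (_ | i) | j'
    · exact .inr (.inl rfl)
    · exact .inr (.inr (region_eq_of_adj_inl_inr h.symm))
    · simp [convexTightRel] at h

lemma exists_walk_length_le_two (u : Vertex k) (i : Fin k) :
    ∃ p : (graph k).Walk u (.inl (.inl i)), p.length ≤ 2 := by
  rcases u with (i' | i') | j
  · exact ⟨.cons (adj_inl_inl_inr i' (blockVertex 0 i))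
      (.cons (adj_inl_inl_inr i _).symm .nil), le_rfl⟩
  · exact ⟨.cons (adj_blockVertex i' i) (.cons (adj_inl_inl_inr i _).symm .nil), le_rfl⟩
  · exact ⟨.cons (adj_inl_inl_inr i j).symm .nil, by simp⟩

lemma connected (hk : 1 ≤ k) : (graph k).Connected := by
  rw [connected_iff_exists_forall_reachable]
  refine ⟨.inl (.inl ⟨0, hk⟩), fun u => ?_⟩
  obtain ⟨p, -⟩ := exists_walk_length_le_two u ⟨0, hk⟩
  exact p.reachable.symm

lemma dist_le_two (u : Vertex k) (i : Fin k) : (graph k).dist u (.inl (.inl i)) ≤ 2 := by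
  obtain ⟨p, hp⟩ := exists_walk_length_le_two u i
  exact (dist_le p).trans hp

lemma exists_adj_inr_notMem (w : Fin k ⊕ Fin (k + 2)) {S : Finset (Vertex k)} (hS : #S < k) :
    ∃ j, (.inr j : Vertex k) ∉ S ∧ (graph k).Adj (.inl w) (.inr j) := by
  obtain ⟨t, ht⟩ := exists_apply_notMem_of_card_lt (f := fun t => (.inr (blockVertex
    (w.elim (fun _ => 0) id) t) : Vertex k))
    (Sum.inr_injective.comp (blockVertex_injective _)) (by simpa using hS)
  refine ⟨_, ht, ?_⟩
  rcases w with i | i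
  · exact adj_inl_inl_inr i _
  · exact adj_blockVertex i t

lemma induce_compl_connected {S : Finset (Vertex k)} (hS : #S < k) :
    ((graph k).induce (↑S : Set (Vertex k))ᶜ).Connected := by
  obtain ⟨i, hi⟩ := exists_apply_notMem_of_card_lt
    (f := fun i : Fin k => (.inl (.inl i) : Vertex k))
    (Sum.inl_injective.comp Sum.inl_injective) (by simpa using hS)
  have reach_inr (j) (hj : (.inr j : Vertex k) ∉ S) :
      ((graph k).induce (↑S : Set (Vertex k))ᶜ).Reachable ⟨_, hi⟩ ⟨.inr j, hj⟩ :=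
    Adj.reachable (adj_inl_inl_inr i j)
  rw [connected_iff_exists_forall_reachable]
  refine ⟨⟨_, hi⟩, ?_⟩
  rintro ⟨w | j, hv⟩
  · obtain ⟨j, hj, hadj⟩ := exists_adj_inr_notMem w hS
    exact (reach_inr j hj).trans (Adj.reachable (G := (graph k).induce _)
      (u := ⟨_, hv⟩) (v := ⟨_, hj⟩) hadj).symm
  · exact reach_inr j hv

lemma two_le_eccW (hk : 1 ≤ k) {a b : Vertex k} {p : (graph k).Walk a b} (hp : p.IsPath) :
    2 ≤ eccW (graph k) p := by
  by_contra! h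
  have hall : univ ⊆ (p.support.filterMap region).toFinset := by
    intro i _
    obtain ⟨v, hv, hd⟩ := (eccW_le_iff p).mp (Nat.le_of_lt_succ h) (.inl (.inr i))
    rw [List.mem_toFinset, List.mem_filterMap]
    refine ⟨v, hv, ?_⟩
    rcases ((connected hk).preconnected _ _).eq_or_adj_of_dist_le_one hd with rfl | hadj
    · rfl
    · exact region_eq_of_adj_inl_inr hadj
  have hregions := p.card_toFinset_filterMap_support_le region
    fun _ _ => region_eq_none_or_eq_of_adj
  have hY := (p.support.tail_sublist.countP_le (p := fun v => (region v).isNone)).trans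
    (hp.support_nodup.countP_le_card _)
  have := card_le_card hall
  rw [card_filter_region_isNone] at hY
  simp only [card_univ, Fintype.card_fin] at this
  omega

end ConvexTight

theorem stmt16 (k : ℕ) (hk : 1 ≤ k) :
    KConnected k (SimpleGraph.fromRel (convexTightRel k)) ∧
    (∀ (w : Fin k ⊕ Fin (k + 2)) (x₁ x₂ x₃ : Fin (k * (k + 2))),
      (SimpleGraph.fromRel (convexTightRel k)).Adj (Sum.inl w) (Sum.inr x₁) →
      (SimpleGraph.fromRel (convexTightRel k)).Adj (Sum.inl w) (Sum.inr x₃) →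
      x₁ ≤ x₂ → x₂ ≤ x₃ →
      (SimpleGraph.fromRel (convexTightRel k)).Adj (Sum.inl w) (Sum.inr x₂)) ∧
    pe (SimpleGraph.fromRel (convexTightRel k)) = 2 := by
  refine ⟨⟨?_, fun S hS => ConvexTight.induce_compl_connected hS⟩,
    fun w _ _ _ => ConvexTight.adj_inr_of_le_of_le w, ?_⟩
  · rw [ConvexTight.card_vertex]
    omega
  · let y : ConvexTight.Vertex k := .inl (.inl ⟨0, hk⟩)
    refine pe_eq_of_forall_le (Walk.nil : (ConvexTight.graph k).Walk y y) .nil ?_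
      fun _ _ _ hQ => ConvexTight.two_le_eccW hk hQ
    exact (eccW_le_iff _).mpr fun u => ⟨y, by simp, ConvexTight.dist_le_two u _⟩
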